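/- arXiv:1610.02080 — 7 statements merged into one kernel-verified Lean document; each statement's English description precedes it below -/
import Mathlib

section
/- Let d ≥ 1 and suppose nonnegative reals σ²_u are given for each nonempty subset u of {1,…,d}, with σ²_∅ = 0. Define the game val(u) = Σ_{v ⊆ u} σ²_v for u ⊆ {1,…,d}. Then the Shapley value of player j for this game equals φ_j = Σ_{u ⊆ {1,…,d}, j ∈ u} σ²_u / |u|. -/
open Finset

/-- The Shapley value of player `j` for the cooperative game `val` on subsets of `Fin d`. -/
noncomputable def shapley {d : ℕ} (val : Finset (Fin d) → ℝ) (j : Fin d) : ℝ :=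
  (d : ℝ)⁻¹ * ∑ u ∈ (Finset.univ.erase j).powerset,
    ((Nat.choose (d - 1) u.card : ℝ))⁻¹ * (val (insert j u) - val u)

/-!
The game `u ↦ ∑_{v ⊆ u} σ2 v` is the combination `∑_v σ2 v • [v ⊆ ·]` of unanimity games, and the
Shapley value is linear in the game. In the unanimity game of `v`, a player `j ∈ v` makes a
marginal contribution exactly to the coalitions `u ⊇ v \ {j}` not containing `j`, and by the
hockey-stick identity the Shapley weights of these add up to `1 / |v|`; a player outside `v`
never contributes.
-/

theorem sum_range_choose_div_choose_add (k m : ℕ) :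
    ∑ i ∈ range (k + 1), ((k.choose i : ℝ) / (m + k).choose (m + i))
      = (m + k + 1) / (m + 1) := by
  have hpos : (0 : ℝ) < (m + k).choose m := by exact_mod_cast Nat.choose_pos (by omega)
  -- `C(m+k, m+i) C(m+i, m) = C(m+k, m) C(k, i)` turns each term into `C(i+m, m) / C(m+k, m)`.
  have hterm : ∀ i ∈ range (k + 1),
      (k.choose i : ℝ) / (m + k).choose (m + i) = ((i + m).choose m : ℝ) / (m + k).choose m := by
    intro i hi
    have hik : i ≤ k := Nat.lt_succ_iff.mp (mem_range.mp hi)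
    have hmul : (m + k).choose (m + i) * (m + i).choose m = (m + k).choose m * k.choose i := by
      simpa using Nat.choose_mul (n := m + k) (Nat.le_add_right m i)
    have hpos' : (0 : ℝ) < (m + k).choose (m + i) := by exact_mod_cast Nat.choose_pos (by omega)
    have hmul' : ((m + k).choose (m + i) : ℝ) * (m + i).choose m
        = (m + k).choose m * k.choose i := by exact_mod_cast hmul
    rw [div_eq_div_iff hpos'.ne' hpos.ne', add_comm i m]
    linarith
  have hpascal :
      ((m + k + 1 : ℕ) : ℝ) * (m + k).choose m = (m + k + 1).choose (m + 1) * (m + 1) := by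
    exact_mod_cast Nat.add_one_mul_choose_eq (m + k) m
  rw [sum_congr rfl hterm, ← sum_div, ← Nat.cast_sum, Nat.sum_range_add_choose, add_comm k m,
    div_eq_div_iff hpos.ne' (by positivity)]
  push_cast at hpascal ⊢
  linarith

theorem sum_Icc_inv_choose_card {α : Type*} [DecidableEq α] {s t : Finset α} (hst : s ⊆ t) :
    ∑ u ∈ Icc s t, ((t.card.choose u.card : ℝ))⁻¹ = (t.card + 1) / (s.card + 1) := by
  have hdisj : ∀ w ∈ (t \ s).powerset, Disjoint s w := fun w hw =>
    disjoint_of_subset_right (mem_powerset.mp hw) disjoint_sdiff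
  have hinj : Set.InjOn (s ∪ ·) (t \ s).powerset := fun w hw w' hw' h => by
    simpa [union_sdiff_cancel_left (hdisj w hw), union_sdiff_cancel_left (hdisj w' hw')]
      using congrArg (· \ s) h
  have hcard : t.card = s.card + (t \ s).card := by
    rw [card_sdiff_of_subset hst, Nat.add_sub_cancel' (card_le_card hst)]
  rw [Icc_eq_image_powerset hst, sum_image hinj,
    sum_congr rfl fun w hw => by rw [card_union_of_disjoint (hdisj w hw)],
    sum_powerset_apply_card (fun i => ((t.card.choose (s.card + i) : ℝ))⁻¹), hcard]
  simpa [div_eq_mul_inv, mul_comm] using sum_range_choose_div_choose_add (t \ s).card s.card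

def unanimity {d : ℕ} (v u : Finset (Fin d)) : ℝ := if v ⊆ u then 1 else 0

theorem shapley_sum {d : ℕ} {ι : Type*} (s : Finset ι) (c : ι → ℝ)
    (game : ι → Finset (Fin d) → ℝ) (j : Fin d) :
    shapley (fun u => ∑ i ∈ s, c i * game i u) j = ∑ i ∈ s, c i * shapley (game i) j := by
  simp only [shapley, ← sum_sub_distrib, ← mul_sub, mul_sum]
  rw [sum_comm]
  exact sum_congr rfl fun i _ => sum_congr rfl fun u _ => by ring

theorem shapley_unanimity {d : ℕ} (v : Finset (Fin d)) (j : Fin d) :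
    shapley (unanimity v) j = if j ∈ v then (v.card : ℝ)⁻¹ else 0 := by
  split_ifs with hjv
  · have hmarginal : ∀ u ∈ (univ.erase j).powerset,
        unanimity v (insert j u) - unanimity v u = if v.erase j ⊆ u then 1 else 0 := by
      intro u hu
      have hvu : ¬ v ⊆ u := fun h => (mem_erase.mp (mem_powerset.mp hu (h hjv))).1 rfl
      simp [unanimity, subset_insert_iff, hvu]
    have hsum := sum_Icc_inv_choose_card (erase_subset_erase j (subset_univ v))
    rw [Icc_eq_filter_powerset, sum_filter, ← Nat.cast_add_one, ← Nat.cast_add_one,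
      card_erase_add_one (mem_univ j), card_erase_add_one hjv, card_erase_of_mem (mem_univ j),
      card_univ, Fintype.card_fin] at hsum
    have hd : (d : ℝ) ≠ 0 := by exact_mod_cast j.pos.ne'
    rw [shapley, sum_congr rfl fun u hu => by rw [hmarginal u hu, mul_ite, mul_one, mul_zero], hsum]
    field_simp
  · have hmarginal : ∀ u, unanimity v (insert j u) = unanimity v u := fun u => by
      simp [unanimity, subset_insert_iff_of_notMem hjv]
    simp [shapley, hmarginal]

theorem shapley_of_anova_general (d : ℕ) (σ2 : Finset (Fin d) → ℝ) (j : Fin d) :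
    shapley (fun u => ∑ v ∈ u.powerset, σ2 v) j
      = ∑ u ∈ Finset.univ.powerset.filter (fun u => j ∈ u), σ2 u / u.card := by
  have hgame : (fun u => ∑ v ∈ u.powerset, σ2 v)
      = fun u => ∑ v ∈ univ.powerset, σ2 v * unanimity v u := by
    ext u
    simp [unanimity, mul_ite, ← sum_filter, filter_subset_univ]
  rw [hgame, shapley_sum, sum_filter]
  simp [shapley_unanimity, div_eq_mul_inv]

/-- If the value of a coalition `u` is the sum of nonnegative variance components `σ2 v`
over `v ⊆ u` (with `σ2 ∅ = 0`), then the Shapley value of player `j` is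
`∑_{u ∋ j} σ2 u / |u|`. -/
theorem shapley_of_anova (d : ℕ) (hd : 1 ≤ d) (σ2 : Finset (Fin d) → ℝ)
    (hσ : ∀ u, 0 ≤ σ2 u) (h0 : σ2 ∅ = 0) (j : Fin d) :
    shapley (fun u => ∑ v ∈ u.powerset, σ2 v) j
      = ∑ u ∈ Finset.univ.powerset.filter (fun u => j ∈ u), σ2 u / u.card :=
  shapley_of_anova_general d σ2 j
end

section
/- Let d ≥ 1 and suppose nonnegative reals σ²_u are given for each nonempty subset u of {1,…,d}, with σ²_∅ = 0, and let val(u) = Σ_{v ⊆ u} σ²_v. Then the Shapley value φ_j of player j satisfies val({j}) ≤ φ_j ≤ Σ_{u : u ∩ {j} ≠ ∅} σ²_u; that is, the Shapley value of variable j is bracketed between the lower Sobol' index τ̲²_{{j}} = σ²_{{j}} and the upper Sobol' index τ̄²_{{j}} = Σ_{u ∋ j} σ²_u. -/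
/-!
The marginal contribution of `j` to a coalition `u ∌ j` in the game `u ↦ ∑_{v ⊆ u} σ²_v` is
`∑_{w ⊆ u} σ²_{w ∪ {j}}`, which is monotone in `u` because `σ² ≥ 0`. The Shapley value is an
average of these contributions with weights `1 / (d · C(d-1, |u|))`, which sum to `1` since there
are `C(d-1, k)` coalitions of size `k`. Hence it lies between the contribution to `∅`, which is
`σ²_{{j}}`, and the contribution to the complement of `{j}`, which is `τ̄²_{{j}}`.
-/

open Finset

namespace Finset

variable {α β : Type*}

theorem sum_inv_choose_card_powerset {K : Type*} [DivisionSemiring K] [CharZero K]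
    (s : Finset α) : ∑ t ∈ s.powerset, ((#s).choose #t : K)⁻¹ = #s + 1 := by
  rw [sum_powerset_apply_card fun k => ((#s).choose k : K)⁻¹]
  have hterm : ∀ k ∈ range (#s + 1), (#s).choose k • ((#s).choose k : K)⁻¹ = 1 := fun k hk => by
    have hk : ((#s).choose k : K) ≠ 0 :=
      Nat.cast_ne_zero.2 (Nat.choose_pos (Nat.lt_succ_iff.1 (mem_range.1 hk))).ne'
    rw [nsmul_eq_mul, mul_inv_cancel₀ hk]
  rw [sum_congr rfl hterm, sum_const, card_range, nsmul_one, Nat.cast_succ]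

theorem sum_powerset_filter_mem [DecidableEq α] [AddCommGroup β] (s : Finset α) (a : α)
    (f : Finset α → β) :
    ∑ t ∈ s.powerset with a ∈ t, f t
      = ∑ t ∈ s.powerset, f t - ∑ t ∈ (s.erase a).powerset, f t := by
  rw [eq_sub_iff_add_eq, ← sum_filter_add_sum_filter_not s.powerset (a ∈ ·)]
  congr 2
  ext t
  simp only [mem_filter, mem_powerset, subset_erase]

theorem sum_powerset_insert_sub_sum_powerset_mono [DecidableEq α] [AddCommGroup β]
    [PartialOrder β] [IsOrderedAddMonoid β] {f : Finset α → β} (hf : ∀ t, 0 ≤ f t) {a : α}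
    {s t : Finset α} (hst : s ⊆ t) (ht : a ∉ t) :
    ∑ v ∈ (insert a s).powerset, f v - ∑ v ∈ s.powerset, f v
      ≤ ∑ v ∈ (insert a t).powerset, f v - ∑ v ∈ t.powerset, f v := by
  rw [sum_powerset_insert (notMem_mono hst ht), sum_powerset_insert ht, add_sub_cancel_left,
    add_sub_cancel_left]
  exact sum_le_sum_of_subset_of_nonneg (powerset_mono.2 hst) fun _ _ _ => hf _

end Finset

section Shapley

variable {d : ℕ} {val : Finset (Fin d) → ℝ} {j : Fin d}

theorem inv_mul_sum_inv_choose_powerset_erase (j : Fin d) :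
    (d : ℝ)⁻¹ * ∑ u ∈ (univ.erase j).powerset, ((d - 1).choose #u : ℝ)⁻¹ = 1 := by
  have hcard : #(univ.erase j) = d - 1 := by simp
  have hd : (d : ℝ) ≠ 0 := Nat.cast_ne_zero.2 (Fin.pos j).ne'
  rw [← hcard, sum_inv_choose_card_powerset, hcard, Nat.cast_sub (Fin.pos j), Nat.cast_one,
    sub_add_cancel, inv_mul_cancel₀ hd]

theorem le_shapley_of_le_marginal {a : ℝ}
    (h : ∀ u ⊆ univ.erase j, a ≤ val (insert j u) - val u) : a ≤ shapley val j := calc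
  a = (d : ℝ)⁻¹ * ∑ u ∈ (univ.erase j).powerset, ((d - 1).choose #u : ℝ)⁻¹ * a := by
    rw [← sum_mul, ← mul_assoc, inv_mul_sum_inv_choose_powerset_erase, one_mul]
  _ ≤ shapley val j := by
    unfold shapley
    gcongr with u hu
    exact h u (mem_powerset.1 hu)

theorem shapley_le_of_marginal_le {b : ℝ}
    (h : ∀ u ⊆ univ.erase j, val (insert j u) - val u ≤ b) : shapley val j ≤ b := calc
  shapley val j
      ≤ (d : ℝ)⁻¹ * ∑ u ∈ (univ.erase j).powerset, ((d - 1).choose #u : ℝ)⁻¹ * b := by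
    unfold shapley
    gcongr with u hu
    exact h u (mem_powerset.1 hu)
  _ = b := by rw [← sum_mul, ← mul_assoc, inv_mul_sum_inv_choose_powerset_erase, one_mul]

end Shapley

theorem shapley_between_sobol_indices_general (d : ℕ) (σ2 : Finset (Fin d) → ℝ)
    (hσ : ∀ u, 0 ≤ σ2 u) (h0 : σ2 ∅ = 0) (j : Fin d) :
    (∑ v ∈ ({j} : Finset (Fin d)).powerset, σ2 v)
        ≤ shapley (fun u => ∑ v ∈ u.powerset, σ2 v) j ∧
      shapley (fun u => ∑ v ∈ u.powerset, σ2 v) j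
        ≤ ∑ u ∈ Finset.univ.powerset.filter (fun u => u ∩ {j} ≠ ∅), σ2 u := by
  have hlower : ∑ v ∈ ({j} : Finset (Fin d)).powerset, σ2 v
      = ∑ v ∈ (insert j (∅ : Finset (Fin d))).powerset, σ2 v
        - ∑ v ∈ (∅ : Finset (Fin d)).powerset, σ2 v := by
    simp [h0]
  have hupper : ∑ u ∈ univ.powerset.filter (fun u => u ∩ {j} ≠ ∅), σ2 u
      = ∑ v ∈ (insert j (univ.erase j)).powerset, σ2 v
        - ∑ v ∈ (univ.erase j).powerset, σ2 v := by
    have hmem : ∀ u : Finset (Fin d), u ∩ {j} ≠ ∅ ↔ j ∈ u := by simp [inter_singleton]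
    simp_rw [hmem]
    rw [insert_erase (mem_univ j), sum_powerset_filter_mem]
  have hj : j ∉ univ.erase j := notMem_erase j univ
  rw [hlower, hupper]
  exact ⟨le_shapley_of_le_marginal fun u hu =>
      sum_powerset_insert_sub_sum_powerset_mono hσ (empty_subset u) (notMem_mono hu hj),
    shapley_le_of_marginal_le fun u hu => sum_powerset_insert_sub_sum_powerset_mono hσ hu hj⟩

/-- For the variance-explained game `val u = ∑_{v ⊆ u} σ2 v` built from nonnegative
ANOVA variance components, the Shapley value of player `j` is bracketed between the
lower Sobol' index `val {j}` and the upper Sobol' index `∑_{u ∩ {j} ≠ ∅} σ2 u`. -/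
theorem shapley_between_sobol_indices (d : ℕ) (hd : 1 ≤ d) (σ2 : Finset (Fin d) → ℝ)
    (hσ : ∀ u, 0 ≤ σ2 u) (h0 : σ2 ∅ = 0) (j : Fin d) :
    (∑ v ∈ ({j} : Finset (Fin d)).powerset, σ2 v)
        ≤ shapley (fun u => ∑ v ∈ u.powerset, σ2 v) j ∧
      shapley (fun u => ∑ v ∈ u.powerset, σ2 v) j
        ≤ ∑ u ∈ Finset.univ.powerset.filter (fun u => u ∩ {j} ≠ ∅), σ2 u :=
  shapley_between_sobol_indices_general d σ2 hσ h0 j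
end

section
/- Let x = (x_1,…,x_d) be a random vector on a probability space and let Y = f(x) be square-integrable with variance σ². Define val(u) = Var(E[Y | x_u]) for u ⊆ {1,…,d} (where val(∅) = 0 and E[Y|x_u] is the conditional expectation given the σ-algebra generated by (x_j)_{j∈u}). Then the Shapley values φ_j of this game satisfy: (i) φ_j ≥ 0 for every j, and (ii) Σ_{j=1}^d φ_j = σ². -/
/-!
Nonnegativity: the game `u ↦ Var(E[Y | x_u])` is monotone, because by the tower property and the
law of total variance `Var(E[Y | m]) = Var(E[E[Y | m'] | m]) ≤ Var(E[Y | m'])` for `m ≤ m'`.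

Efficiency holds for every game: the weight `1 / (d C(d-1, k))` of a pair `(j, u)` with `j ∉ u`,
`|u| = k`, equals both `1 / ((k+1) C(d, k+1))` and `1 / ((d-k) C(d, k))`. Counting the pairs, the
sum of the Shapley values becomes `∑_{s ≠ ∅} val s / C(d,|s|) - ∑_{s ≠ univ} val s / C(d,|s|)`,
which telescopes to `val univ - val ∅ = Var(Y) - 0`.
-/

open Finset MeasureTheory ProbabilityTheory

/-- The σ-algebra generated by the variables `x j`, `j ∈ u`. -/
def mGen {Ω : Type*} {d : ℕ} (x : Fin d → Ω → ℝ) (u : Finset (Fin d)) :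
    MeasurableSpace Ω :=
  ⨆ j ∈ u, MeasurableSpace.comap (x j) Real.measurableSpace

namespace Finset

variable {α M : Type*} [Fintype α] [DecidableEq α] [AddCommMonoid M]

theorem powerset_univ_erase_eq_filter (j : α) :
    (univ.erase j).powerset = ({u | j ∉ u} : Finset (Finset α)) := by
  ext u
  simp only [mem_powerset, subset_erase, subset_univ, true_and, mem_filter, mem_univ]

theorem sum_sum_powerset_univ_erase (f : Finset α → M) :
    ∑ j, ∑ u ∈ (univ.erase j).powerset, f u = ∑ u, #uᶜ • f u := by
  simp_rw [powerset_univ_erase_eq_filter, sum_filter]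
  rw [sum_comm]
  refine sum_congr rfl fun u _ => ?_
  rw [← sum_filter, ← compl_filter, filter_mem_eq_inter, univ_inter, sum_const]

theorem sum_sum_powerset_univ_erase_insert (f : Finset α → M) :
    ∑ j, ∑ u ∈ (univ.erase j).powerset, f (insert j u) = ∑ s, #s • f s := by
  have (j : α) : ∑ u ∈ (univ.erase j).powerset, f (insert j u) = ∑ s with j ∈ s, f s := by
    refine sum_nbij' (insert j) (erase · j) ?_ ?_ ?_ ?_ fun _ _ => rfl <;>
      intro u hu <;> simp_all [subset_erase]
  simp_rw [this, sum_filter]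
  rw [sum_comm]
  simp

end Finset

theorem inv_mul_choose_eq_inv_mul_choose_succ (n k : ℕ) :
    (((n + 1 : ℕ) : ℝ) * n.choose k)⁻¹ = (((k + 1 : ℕ) : ℝ) * (n + 1).choose (k + 1))⁻¹ := by
  rw [mul_comm (((k + 1 : ℕ) : ℝ))]
  exact_mod_cast congrArg (fun m : ℕ => (m : ℝ)⁻¹) (Nat.add_one_mul_choose_eq n k)

theorem inv_mul_choose_eq_inv_sub_mul_choose (n k : ℕ) :
    (((n + 1 : ℕ) : ℝ) * n.choose k)⁻¹ = (((n + 1 - k : ℕ) : ℝ) * (n + 1).choose k)⁻¹ := by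
  rw [mul_comm, mul_comm (((n + 1 - k : ℕ) : ℝ))]
  exact_mod_cast congrArg (fun m : ℕ => (m : ℝ)⁻¹) (Nat.choose_mul_succ_eq n k)

theorem nsmul_mul_inv_natCast_mul (k : ℕ) (a c : ℝ) :
    k • (a * (k * c)⁻¹) = if k = 0 then 0 else a * c⁻¹ := by
  split_ifs with hk
  · simp [hk]
  · rw [nsmul_eq_mul, mul_inv]
    field_simp

theorem shapley_eq_sum_sub (n : ℕ) (val : Finset (Fin (n + 1)) → ℝ) (j : Fin (n + 1)) :
    shapley val j = ∑ u ∈ (univ.erase j).powerset,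
      (val (insert j u) * ((#(insert j u) : ℝ) * (n + 1).choose #(insert j u))⁻¹ -
        val u * ((#uᶜ : ℝ) * (n + 1).choose #u)⁻¹) := by
  rw [shapley, mul_sum]
  refine sum_congr rfl fun u hu => ?_
  have hj : j ∉ u := by simpa [subset_erase] using hu
  rw [card_insert_of_notMem hj, card_compl, Fintype.card_fin, Nat.add_sub_cancel,
    ← inv_mul_choose_eq_inv_mul_choose_succ, ← inv_mul_choose_eq_inv_sub_mul_choose, mul_inv]
  ring

theorem sum_shapley {d : ℕ} (val : Finset (Fin d) → ℝ) :
    ∑ j, shapley val j = val univ - val ∅ := by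
  rcases d with _ | n
  · simp
  set F : Finset (Fin (n + 1)) → ℝ := fun s => val s * ((n + 1).choose #s : ℝ)⁻¹
  have sum_ite_eq_sub (t : Finset (Fin (n + 1))) :
      (∑ s, if s = t then 0 else F s) = ∑ s, F s - F t := by
    rw [sum_ite, sum_const_zero, zero_add, filter_ne', sum_erase_eq_sub (mem_univ t)]
  simp_rw [shapley_eq_sum_sub, sum_sub_distrib, sum_sum_powerset_univ_erase_insert
    (fun s => val s * ((#s : ℝ) * (n + 1).choose #s)⁻¹), sum_sum_powerset_univ_erase,
    nsmul_mul_inv_natCast_mul, card_eq_zero, compl_eq_empty_iff]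
  rw [sum_ite_eq_sub, sum_ite_eq_sub]
  simp [F]

theorem shapley_nonneg {d : ℕ} {val : Finset (Fin d) → ℝ} (hval : Monotone val) (j : Fin d) :
    0 ≤ shapley val j :=
  mul_nonneg (by positivity) <| sum_nonneg fun u _ =>
    mul_nonneg (by positivity) (sub_nonneg.2 (hval (subset_insert j u)))

namespace ProbabilityTheory

variable {Ω : Type*} {m m' m₀ : MeasurableSpace Ω} {μ : Measure[m₀] Ω} [IsProbabilityMeasure μ]
  {X : Ω → ℝ}

theorem variance_condExp_le (hm : m ≤ m₀) (hX : MemLp X 2 μ) : Var[μ[X | m]; μ] ≤ Var[X; μ] := by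
  have : 0 ≤ μ[Var[X; μ | m]] :=
    integral_nonneg_of_ae (condExp_nonneg (.of_forall fun _ => sq_nonneg _))
  linarith [integral_condVar_add_variance_condExp hm hX]

theorem variance_condExp_mono (hm : m ≤ m') (hm' : m' ≤ m₀) (hX : MemLp X 2 μ) :
    Var[μ[X | m]; μ] ≤ Var[μ[X | m']; μ] := by
  rw [← variance_congr (condExp_condExp_of_le hm hm')]
  exact variance_condExp_le (hm.trans hm') (hX.condExp one_le_two)

theorem variance_condExp_bot (X : Ω → ℝ) : Var[μ[X | ⊥]; μ] = 0 := by
  simp [condExp_bot, variance, evariance]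

end ProbabilityTheory

section mGen

variable {Ω : Type*} {d : ℕ}

theorem mGen_le [m₀ : MeasurableSpace Ω] {x : Fin d → Ω → ℝ} (hx : ∀ j, Measurable (x j))
    (u : Finset (Fin d)) : mGen x u ≤ m₀ :=
  iSup₂_le fun j _ => (hx j).comap_le

theorem mGen_mono (x : Fin d → Ω → ℝ) : Monotone (mGen x) :=
  fun _ _ huv => biSup_mono fun _ hj => huv hj

theorem mGen_empty (x : Fin d → Ω → ℝ) : mGen x ∅ = ⊥ := by
  simp [mGen]

end mGen

/-- For the game `val u = Var(E[Y ∣ x_u])`, the Shapley values are nonnegative and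
sum to the total variance `Var(Y)`. -/
theorem shapley_varexplained_nonneg_and_efficient
    {Ω : Type*} [m0 : MeasurableSpace Ω] (μ : Measure Ω) [IsProbabilityMeasure μ]
    (d : ℕ) (x : Fin d → Ω → ℝ) (hx : ∀ j, Measurable (x j))
    (Y : Ω → ℝ) (hY2 : MemLp Y 2 μ)
    (hYmeas : Measurable[mGen x Finset.univ] Y) :
    (∀ j, 0 ≤ shapley (fun u => variance (μ[Y | mGen x u]) μ) j) ∧
      ∑ j, shapley (fun u => variance (μ[Y | mGen x u]) μ) j = variance Y μ := by
  have hmono : Monotone fun u => variance (μ[Y | mGen x u]) μ :=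
    fun u v huv => variance_condExp_mono (mGen_mono x huv) (mGen_le hx v) hY2
  refine ⟨shapley_nonneg hmono, ?_⟩
  rw [sum_shapley, mGen_empty, variance_condExp_bot, sub_zero,
    condExp_of_stronglyMeasurable (mGen_le hx univ) hYmeas.stronglyMeasurable
      (hY2.integrable one_le_two)]
end

section
/- Let Σ ∈ ℝ^{d×d} be a symmetric positive definite matrix, β ∈ ℝ^d, j ∈ {1,…,d}, and u ⊆ {1,…,d}\{j}. Write −u for the complement of u and v = −u \ {j}. For any w ⊆ {1,…,d}, write S(w) = Σ_{−w,−w} − Σ_{−w,w} Σ_{w,w}^{-1} Σ_{w,−w} for the Schur complement (conditional covariance of x_{−w} given x_w). Then β_{−u}ᵀ S(u) β_{−u} − β_vᵀ S(u∪{j}) β_v = (c β_{−u})² / D, where c = Σ_{j,−u} − Σ_{j,u} Σ_{u,u}^{-1} Σ_{u,−u} is the row vector of conditional covariances of x_j with x_{−u} given x_u and D = Σ_{jj} − Σ_{j,u} Σ_{u,u}^{-1} Σ_{u,j} > 0 is the conditional variance of x_j given x_u. -/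
open Finset Matrix

/-- The submatrix of `A` with rows indexed by `s` and columns indexed by `t`. -/
def subm {d : ℕ} (A : Matrix (Fin d) (Fin d) ℝ) (s t : Finset (Fin d)) :
    Matrix s t ℝ :=
  A.submatrix (fun i => (i : Fin d)) (fun k => (k : Fin d))

/-- The Schur complement `Σ_{-w,-w} - Σ_{-w,w} Σ_{w,w}⁻¹ Σ_{w,-w}`, i.e. the conditional
covariance matrix of `x_{-w}` given `x_w` for a Gaussian vector with covariance `A`. -/
noncomputable def schurCompl {d : ℕ} (A : Matrix (Fin d) (Fin d) ℝ)
    (w : Finset (Fin d)) : Matrix (wᶜ : Finset (Fin d)) (wᶜ : Finset (Fin d)) ℝ :=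
  subm A wᶜ wᶜ - subm A wᶜ w * (subm A w w)⁻¹ * subm A w wᶜ

/-- The row vector of conditional covariances of `x_j` with `x_{-u}` given `x_u`:
`Σ_{j,-u} - Σ_{j,u} Σ_{u,u}⁻¹ Σ_{u,-u}`. -/
noncomputable def condCovRow {d : ℕ} (A : Matrix (Fin d) (Fin d) ℝ)
    (u : Finset (Fin d)) (j : Fin d) : (uᶜ : Finset (Fin d)) → ℝ :=
  fun k => A j k - ∑ a : u, ∑ b : u, A j a * (subm A u u)⁻¹ a b * A b k

/-- The conditional variance of `x_j` given `x_u`: `Σ_{jj} - Σ_{j,u} Σ_{u,u}⁻¹ Σ_{u,j}`. -/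
noncomputable def condVarGauss {d : ℕ} (A : Matrix (Fin d) (Fin d) ℝ)
    (u : Finset (Fin d)) (j : Fin d) : ℝ :=
  A j j - ∑ a : u, ∑ b : u, A j a * (subm A u u)⁻¹ a b * A b j

/-- The restriction of the coefficient vector `β` to the index set `s`. -/
def restr {d : ℕ} (β : Fin d → ℝ) (s : Finset (Fin d)) : s → ℝ := fun i => β i

/-! For positive definite `A`, the quadratic form of the Schur complement `S(w)` at `γ_{-w}` is
`yᵀ A y`, where `y` is the unique vector that agrees with `γ` off `w` and satisfies `(A y)_w = 0`.
Let `y`, `z` be these vectors for `β` and for `e_j` with respect to `u`, and put `c = (A y)_j`,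
`D = (A z)_j = zᵀ A z > 0`. The vector for `β` with respect to `u ∪ {j}` is `y - (c / D) z`, and
expanding its quadratic form gives `yᵀ A y - c² / D`. Finally `c` and `D` are the conditional
covariance `c β_{-u}` and the conditional variance of `x_j`. -/

theorem Matrix.PosDef.eq_zero_of_forall_eq_zero_or_mulVec_eq_zero {n : Type*} [Fintype n]
    {A : Matrix n n ℝ} (hA : A.PosDef) {x : n → ℝ} (hx : ∀ i, x i = 0 ∨ (A *ᵥ x) i = 0) :
    x = 0 := by
  by_contra hne
  have hquad : x ⬝ᵥ (A *ᵥ x) = 0 :=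
    Finset.sum_eq_zero fun i _ => by rcases hx i with h | h <;> simp [h]
  simpa [hquad] using hA.dotProduct_mulVec_pos hne

theorem Matrix.IsSymm.dotProduct_mulVec_comm {n α : Type*} [Fintype n]
    [NonUnitalCommSemiring α] {A : Matrix n n α} (hA : A.IsSymm) (x y : n → α) :
    x ⬝ᵥ (A *ᵥ y) = y ⬝ᵥ (A *ᵥ x) := by
  simpa [hA.eq] using dotProduct_transpose_mulVec A x y

section

variable {d : ℕ}

theorem dotProduct_eq_restr_add_restr_compl (x v : Fin d → ℝ) (w : Finset (Fin d)) :
    x ⬝ᵥ v = restr x w ⬝ᵥ restr v w + restr x wᶜ ⬝ᵥ restr v wᶜ := by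
  simp only [dotProduct, restr]
  rw [Finset.sum_coe_sort w (fun i => x i * v i), Finset.sum_coe_sort wᶜ (fun i => x i * v i),
    Finset.sum_add_sum_compl]

theorem restr_single_one {u : Finset (Fin d)} {j : Fin d} (hj : j ∈ u) :
    restr (Pi.single j 1) u = Pi.single ⟨j, hj⟩ (1 : ℝ) := by
  funext k
  simp only [restr, Pi.single_apply, Subtype.ext_iff]

/-- The coefficient vector `y` of the residual `yᵀx = γ_{-w}ᵀ (x_{-w} - E[x_{-w} | x_w])` of a
centred Gaussian vector `x` with covariance `A`: it equals `γ` off `w` and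
`-A_{ww}⁻¹ A_{w,-w} γ_{-w}` on `w`. -/
noncomputable def residualCoeff (A : Matrix (Fin d) (Fin d) ℝ) (γ : Fin d → ℝ)
    (w : Finset (Fin d)) : Fin d → ℝ :=
  fun i => if h : i ∈ w then -((subm A w w)⁻¹ *ᵥ (subm A w wᶜ *ᵥ restr γ wᶜ)) ⟨i, h⟩ else γ i

section residualCoeff

variable (A : Matrix (Fin d) (Fin d) ℝ) (γ : Fin d → ℝ) (w : Finset (Fin d))

theorem restr_residualCoeff :
    restr (residualCoeff A γ w) w = -((subm A w w)⁻¹ *ᵥ (subm A w wᶜ *ᵥ restr γ wᶜ)) := by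
  funext k
  exact dif_pos k.2

theorem residualCoeff_apply_of_notMem {i : Fin d} (hi : i ∉ w) : residualCoeff A γ w i = γ i :=
  dif_neg hi

theorem restr_residualCoeff_compl : restr (residualCoeff A γ w) wᶜ = restr γ wᶜ := by
  funext k
  exact residualCoeff_apply_of_notMem A γ w (Finset.mem_compl.mp k.2)

theorem mulVec_residualCoeff_apply (i : Fin d) :
    (A *ᵥ residualCoeff A γ w) i = restr (A i) wᶜ ⬝ᵥ restr γ wᶜ
      - restr (A i) w ⬝ᵥ ((subm A w w)⁻¹ *ᵥ (subm A w wᶜ *ᵥ restr γ wᶜ)) := by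
  rw [mulVec, dotProduct_eq_restr_add_restr_compl _ _ w, restr_residualCoeff,
    restr_residualCoeff_compl, dotProduct_neg]
  ring

theorem restr_mulVec_residualCoeff (s : Finset (Fin d)) :
    restr (A *ᵥ residualCoeff A γ w) s = subm A s wᶜ *ᵥ restr γ wᶜ
      - subm A s w *ᵥ ((subm A w w)⁻¹ *ᵥ (subm A w wᶜ *ᵥ restr γ wᶜ)) := by
  funext i
  exact mulVec_residualCoeff_apply A γ w i

theorem restr_mulVec_residualCoeff_self (hw : IsUnit (subm A w w)) :
    restr (A *ᵥ residualCoeff A γ w) w = 0 := by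
  rw [restr_mulVec_residualCoeff, mulVec_mulVec,
    mul_nonsing_inv _ ((isUnit_iff_isUnit_det _).mp hw), one_mulVec, sub_self]

theorem mulVec_residualCoeff_apply_of_mem (hw : IsUnit (subm A w w)) {i : Fin d} (hi : i ∈ w) :
    (A *ᵥ residualCoeff A γ w) i = 0 :=
  congrFun (restr_mulVec_residualCoeff_self A γ w hw) ⟨i, hi⟩

theorem schurCompl_mulVec_restr :
    schurCompl A w *ᵥ restr γ wᶜ = restr (A *ᵥ residualCoeff A γ w) wᶜ := by
  rw [restr_mulVec_residualCoeff, schurCompl, sub_mulVec, mulVec_mulVec, mulVec_mulVec,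
    Matrix.mul_assoc]

theorem schurCompl_quadForm (hw : IsUnit (subm A w w)) :
    restr γ wᶜ ⬝ᵥ (schurCompl A w *ᵥ restr γ wᶜ)
      = residualCoeff A γ w ⬝ᵥ (A *ᵥ residualCoeff A γ w) := by
  rw [dotProduct_eq_restr_add_restr_compl _ _ w, restr_mulVec_residualCoeff_self A γ w hw,
    dotProduct_zero, zero_add, restr_residualCoeff_compl, schurCompl_mulVec_restr]

theorem condCovRow_eq (u : Finset (Fin d)) (j : Fin d) :
    condCovRow A u j = restr (A j) uᶜ - (restr (A j) u ᵥ* (subm A u u)⁻¹) ᵥ* subm A u uᶜ := by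
  funext k
  simp only [condCovRow, Pi.sub_apply, vecMul, dotProduct, Finset.sum_mul]
  rw [Finset.sum_comm]
  rfl

theorem condCovRow_dotProduct (u : Finset (Fin d)) (j : Fin d) :
    condCovRow A u j ⬝ᵥ restr γ uᶜ = (A *ᵥ residualCoeff A γ u) j := by
  rw [condCovRow_eq, sub_dotProduct, ← dotProduct_mulVec, ← dotProduct_mulVec,
    mulVec_residualCoeff_apply]

theorem condVarGauss_eq_mulVec_residualCoeff {u : Finset (Fin d)} {j : Fin d} (hj : j ∉ u) :
    condVarGauss A u j = (A *ᵥ residualCoeff A (Pi.single j 1) u) j := by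
  rw [← condCovRow_dotProduct, restr_single_one (Finset.mem_compl.mpr hj), dotProduct_single_one]
  rfl

end residualCoeff

theorem isUnit_subm {A : Matrix (Fin d) (Fin d) ℝ} (hA : A.PosDef) (s : Finset (Fin d)) :
    IsUnit (subm A s s) :=
  (hA.submatrix Subtype.val_injective).isUnit

theorem residualCoeff_single_dotProduct (A : Matrix (Fin d) (Fin d) ℝ) {u : Finset (Fin d)}
    {j : Fin d} (hj : j ∉ u) {v : Fin d → ℝ} (hv : restr v u = 0) :
    residualCoeff A (Pi.single j 1) u ⬝ᵥ v = v j := by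
  rw [dotProduct_eq_restr_add_restr_compl _ _ u, hv, dotProduct_zero, zero_add,
    restr_residualCoeff_compl, restr_single_one (Finset.mem_compl.mpr hj), single_one_dotProduct]
  rfl

section PosDef

variable {A : Matrix (Fin d) (Fin d) ℝ} {u : Finset (Fin d)} {j : Fin d}

theorem mulVec_residualCoeff_single_pos (hA : A.PosDef) (hj : j ∉ u) :
    0 < (A *ᵥ residualCoeff A (Pi.single j 1) u) j := by
  have hz : residualCoeff A (Pi.single j 1) u ≠ 0 := fun h => by
    simpa [residualCoeff_apply_of_notMem A _ u hj] using congrFun h j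
  simpa [residualCoeff_single_dotProduct A hj
    (restr_mulVec_residualCoeff_self A _ u (isUnit_subm hA u))]
    using hA.dotProduct_mulVec_pos hz

theorem eq_residualCoeff (hA : A.PosDef) {γ x : Fin d → ℝ} {w : Finset (Fin d)}
    (hoff : ∀ i ∉ w, x i = γ i) (hker : ∀ i ∈ w, (A *ᵥ x) i = 0) :
    x = residualCoeff A γ w := by
  rw [← sub_eq_zero]
  refine hA.eq_zero_of_forall_eq_zero_or_mulVec_eq_zero fun i => ?_
  by_cases hi : i ∈ w
  · right
    rw [mulVec_sub, Pi.sub_apply, hker i hi,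
      mulVec_residualCoeff_apply_of_mem A γ w (isUnit_subm hA w) hi, sub_self]
  · left
    rw [Pi.sub_apply, hoff i hi, residualCoeff_apply_of_notMem A γ w hi, sub_self]

theorem residualCoeff_insert (hA : A.PosDef) (γ : Fin d → ℝ) (hj : j ∉ u) :
    residualCoeff A γ (insert j u) = residualCoeff A γ u
      - ((A *ᵥ residualCoeff A γ u) j / (A *ᵥ residualCoeff A (Pi.single j 1) u) j)
        • residualCoeff A (Pi.single j 1) u := by
  have hu := isUnit_subm hA u
  have hD := (mulVec_residualCoeff_single_pos hA hj).ne'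
  symm
  refine eq_residualCoeff hA (fun i hi => ?_) (fun i hi => ?_)
  · have hiu : i ∉ u := fun h => hi (Finset.mem_insert_of_mem h)
    have hij : i ≠ j := fun h => hi (h ▸ Finset.mem_insert_self j u)
    simp [residualCoeff_apply_of_notMem A _ u hiu, hij]
  · rw [mulVec_sub, mulVec_smul, Pi.sub_apply, Pi.smul_apply, smul_eq_mul]
    rcases Finset.mem_insert.mp hi with rfl | hiu
    · rw [div_mul_cancel₀ _ hD, sub_self]
    · rw [mulVec_residualCoeff_apply_of_mem A _ u hu hiu,
        mulVec_residualCoeff_apply_of_mem A _ u hu hiu, mul_zero, sub_zero]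

theorem quadForm_residualCoeff_insert (hA : A.PosDef) (γ : Fin d → ℝ) (hj : j ∉ u) :
    residualCoeff A γ (insert j u) ⬝ᵥ (A *ᵥ residualCoeff A γ (insert j u))
      = residualCoeff A γ u ⬝ᵥ (A *ᵥ residualCoeff A γ u)
        - (A *ᵥ residualCoeff A γ u) j ^ 2 / (A *ᵥ residualCoeff A (Pi.single j 1) u) j := by
  have hu := isUnit_subm hA u
  have hD := (mulVec_residualCoeff_single_pos hA hj).ne'
  rw [residualCoeff_insert hA γ hj]
  set y := residualCoeff A γ u
  set z := residualCoeff A (Pi.single j 1) u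
  have hzy : z ⬝ᵥ (A *ᵥ y) = (A *ᵥ y) j :=
    residualCoeff_single_dotProduct A hj (restr_mulVec_residualCoeff_self A γ u hu)
  have hzz : z ⬝ᵥ (A *ᵥ z) = (A *ᵥ z) j :=
    residualCoeff_single_dotProduct A hj (restr_mulVec_residualCoeff_self A _ u hu)
  have hyz : y ⬝ᵥ (A *ᵥ z) = (A *ᵥ y) j :=
    ((isHermitian_iff_isSymm.mp hA.isHermitian).dotProduct_mulVec_comm y z).trans hzy
  simp only [mulVec_sub, mulVec_smul, sub_dotProduct, dotProduct_sub, smul_dotProduct,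
    dotProduct_smul, smul_eq_mul, hzy, hzz, hyz]
  field_simp
  ring

end PosDef

end

/-- Key identity for Shapley effects of a linear function of a Gaussian vector:
the decrease in conditional variance of `βᵀx` when `x_j` is added to the conditioning
set `u` equals `Cov(x_j, x_{-u}ᵀβ_{-u} ∣ x_u)² / Var(x_j ∣ x_u)`, and that conditional
variance is positive. -/
theorem gaussian_linear_variance_reduction {d : ℕ} (A : Matrix (Fin d) (Fin d) ℝ)
    (hA : A.PosDef) (β : Fin d → ℝ) (j : Fin d) (u : Finset (Fin d)) (hj : j ∉ u) :
    0 < condVarGauss A u j ∧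
      restr β uᶜ ⬝ᵥ (schurCompl A u).mulVec (restr β uᶜ)
          - restr β (insert j u)ᶜ ⬝ᵥ
            (schurCompl A (insert j u)).mulVec (restr β (insert j u)ᶜ)
        = (condCovRow A u j ⬝ᵥ restr β uᶜ) ^ 2 / condVarGauss A u j := by
  rw [condVarGauss_eq_mulVec_residualCoeff A hj, condCovRow_dotProduct,
    schurCompl_quadForm A β u (isUnit_subm hA u),
    schurCompl_quadForm A β _ (isUnit_subm hA _), quadForm_residualCoeff_insert hA β hj]
  exact ⟨mulVec_residualCoeff_single_pos hA hj, by ring⟩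
end

section
/- Let (x_1,x_2) have the Farlie–Gumbel–Morgenstern density c_θ(x_1,x_2) = 1 + θ(1−2x_1)(1−2x_2) on [0,1]², with −1 ≤ θ ≤ 1, and let f(x) = β_1 x_1 + β_2 x_2 for β ∈ ℝ². Then σ² := Var(f(x)) = (β_1² + β_2²)/12 + β_1β_2θ/18, Var(E[f(x)|x_1]) = (1/12)(β_1 + (θ/3)β_2)², and if σ² > 0 the Shapley value φ_1 of variable 1 satisfies φ_1/σ² = (1/2)(1 + (1 − θ²/9)(β_1² − β_2²)/(12σ²)). -/
/-!
Both marginals of the FGM copula are uniform on `[0,1]`, because the perturbation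
`θ(1-2x₁)(1-2x₂)` of the density integrates to zero in each variable. Hence
`Var x₁ = Var x₂ = 1/12`, and `E[x₂ ∣ x₁] = 1/2 + (θ/3)(x₁ - 1/2)` is affine, so
`E[f ∣ x₁] = (β₁ + θβ₂/3) x₁ + const` has variance `(β₁ + θβ₂/3)²/12`; symmetrically for `x₂`.
With `Cov(x₁, x₂) = θ/36` this gives `σ²`, and the formula for `φ₁/σ²` is then algebra.
-/

open MeasureTheory ProbabilityTheory

/-- The Farlie–Gumbel–Morgenstern copula measure with parameter `θ` on `[0,1]²`:
it has density `1 + θ(1-2x₁)(1-2x₂)` with respect to Lebesgue measure on `[0,1]²`. -/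
noncomputable def fgm (θ : ℝ) : Measure (ℝ × ℝ) :=
  ((volume : Measure (ℝ × ℝ)).restrict (Set.Icc 0 1 ×ˢ Set.Icc 0 1)).withDensity
    fun p => ENNReal.ofReal (1 + θ * (1 - 2 * p.1) * (1 - 2 * p.2))

/-- The Shapley value of variable `1` in the bivariate game `val u = Var(E[Y ∣ x_u])`:
`φ₁ = (1/2)(Var(E[Y ∣ x₁]) + Var(Y) - Var(E[Y ∣ x₂]))`. -/
noncomputable def phiOne (μ : Measure (ℝ × ℝ)) (Y : ℝ × ℝ → ℝ) : ℝ :=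
  (1 / 2) * (variance (μ[Y | MeasurableSpace.comap Prod.fst Real.measurableSpace]) μ
    + variance Y μ
    - variance (μ[Y | MeasurableSpace.comap Prod.snd Real.measurableSpace]) μ)

open Set
open scoped ENNReal

/-- The density `c_θ` of `fgm θ` on the unit square. -/
def fgmDensity (θ : ℝ) (p : ℝ × ℝ) : ℝ :=
  1 + θ * (1 - 2 * p.1) * (1 - 2 * p.2)

lemma integral_Icc_eq_of_eq_quadratic {F : ℝ → ℝ} (a b c : ℝ)
    (hF : ∀ x, F x = a + b * x + c * x ^ 2) :
    ∫ x in Icc (0 : ℝ) 1, F x = a + b / 2 + c / 3 := by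
  simp_rw [hF]
  rw [integral_Icc_eq_integral_Ioc, ← intervalIntegral.integral_of_le zero_le_one,
    intervalIntegral.integral_add (by apply Continuous.intervalIntegrable; fun_prop)
      (by apply Continuous.intervalIntegrable; fun_prop),
    intervalIntegral.integral_add intervalIntegrable_const
      (by apply Continuous.intervalIntegrable; fun_prop),
    intervalIntegral.integral_const_mul, intervalIntegral.integral_const_mul]
  norm_num
  ring

section

variable {θ : ℝ}

lemma continuous_fgmDensity : Continuous (fgmDensity θ) := by
  unfold fgmDensity
  fun_prop

lemma fgmDensity_nonneg (hθ : θ ∈ Icc (-1) 1) {p : ℝ × ℝ} (hp : p ∈ Icc 0 1 ×ˢ Icc 0 1) :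
    0 ≤ fgmDensity θ p := by
  obtain ⟨⟨hx₀, hx₁⟩, ⟨hy₀, hy₁⟩⟩ := hp
  have hx : |1 - 2 * p.1| ≤ 1 := abs_le.2 ⟨by linarith, by linarith⟩
  have hy : |1 - 2 * p.2| ≤ 1 := abs_le.2 ⟨by linarith, by linarith⟩
  have hprod : |θ * (1 - 2 * p.1) * (1 - 2 * p.2)| ≤ 1 := by
    rw [abs_mul, abs_mul]
    exact mul_le_one₀ (mul_le_one₀ (abs_le.2 hθ) (abs_nonneg _) hx) (abs_nonneg _) hy
  unfold fgmDensity
  linarith [neg_abs_le (θ * (1 - 2 * p.1) * (1 - 2 * p.2))]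

lemma integral_fgmDensity_right (x : ℝ) : ∫ y in Icc (0 : ℝ) 1, fgmDensity θ (x, y) = 1 := by
  rw [integral_Icc_eq_of_eq_quadratic (1 + θ * (1 - 2 * x)) (-2 * θ * (1 - 2 * x)) 0
    fun y => by simp only [fgmDensity]; ring]
  ring

lemma integral_fgmDensity_left (y : ℝ) : ∫ x in Icc (0 : ℝ) 1, fgmDensity θ (x, y) = 1 := by
  simpa only [fgmDensity, mul_right_comm] using integral_fgmDensity_right (θ := θ) y

lemma fgm_eq_withDensity :
    fgm θ = (volume.restrict (Icc 0 1 ×ˢ Icc 0 1)).withDensity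
      fun p => ENNReal.ofReal (fgmDensity θ p) :=
  rfl

lemma setIntegral_fgm (hθ : θ ∈ Icc (-1) 1) {s : Set (ℝ × ℝ)} (hs : MeasurableSet s)
    (g : ℝ × ℝ → ℝ) :
    ∫ p in s, g p ∂fgm θ = ∫ p in s ∩ Icc 0 1 ×ˢ Icc 0 1, fgmDensity θ p * g p := by
  rw [fgm_eq_withDensity, restrict_withDensity hs, Measure.restrict_restrict hs,
    integral_withDensity_eq_integral_toReal_smul continuous_fgmDensity.measurable.ennreal_ofReal
      (ae_of_all _ fun _ => ENNReal.ofReal_lt_top)]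
  refine setIntegral_congr_fun (hs.inter (measurableSet_Icc.prod measurableSet_Icc)) fun p hp => ?_
  rw [smul_eq_mul, ENNReal.toReal_ofReal (fgmDensity_nonneg hθ hp.2)]

lemma _root_.Continuous.integrableOn_inter_Icc_prod {h : ℝ × ℝ → ℝ} (hh : Continuous h)
    {s t : Set ℝ} :
    IntegrableOn h ((s ∩ Icc 0 1) ×ˢ (t ∩ Icc 0 1)) (volume.prod volume) :=
  (hh.continuousOn.integrableOn_compact (isCompact_Icc.prod isCompact_Icc)).mono_set
    (prod_mono inter_subset_right inter_subset_right)

lemma setIntegral_prod_fgm (hθ : θ ∈ Icc (-1) 1) {s t : Set ℝ} (hs : MeasurableSet s)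
    (ht : MeasurableSet t) {g : ℝ × ℝ → ℝ} (hg : Continuous g) :
    ∫ p in s ×ˢ t, g p ∂fgm θ
      = ∫ x in s ∩ Icc 0 1, ∫ y in t ∩ Icc 0 1, fgmDensity θ (x, y) * g (x, y) := by
  rw [setIntegral_fgm hθ (hs.prod ht), prod_inter_prod, Measure.volume_eq_prod]
  exact setIntegral_prod _ (continuous_fgmDensity.mul hg).integrableOn_inter_Icc_prod

lemma setIntegral_prod_fgm_symm (hθ : θ ∈ Icc (-1) 1) {s t : Set ℝ} (hs : MeasurableSet s)
    (ht : MeasurableSet t) {g : ℝ × ℝ → ℝ} (hg : Continuous g) :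
    ∫ p in s ×ˢ t, g p ∂fgm θ
      = ∫ y in t ∩ Icc 0 1, ∫ x in s ∩ Icc 0 1, fgmDensity θ (x, y) * g (x, y) := by
  rw [setIntegral_fgm hθ (hs.prod ht), prod_inter_prod, Measure.volume_eq_prod,
    ← setIntegral_prod_swap, setIntegral_prod]
  · rfl
  · exact ((continuous_fgmDensity.mul hg).comp continuous_swap).integrableOn_inter_Icc_prod

lemma integral_fgm (hθ : θ ∈ Icc (-1) 1) {g : ℝ × ℝ → ℝ} (hg : Continuous g) :
    ∫ p, g p ∂fgm θ = ∫ x in Icc 0 1, ∫ y in Icc 0 1, fgmDensity θ (x, y) * g (x, y) := by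
  simpa only [univ_prod_univ, Measure.restrict_univ, univ_inter]
    using setIntegral_prod_fgm hθ MeasurableSet.univ MeasurableSet.univ hg

lemma isProbabilityMeasure_fgm (hθ : θ ∈ Icc (-1) 1) : IsProbabilityMeasure (fgm θ) := by
  have h := integral_fgm hθ (g := fun _ => 1) continuous_const
  simp only [mul_one, integral_fgmDensity_right, integral_const, smul_eq_mul,
    measureReal_restrict_apply_univ, Real.volume_real_Icc_of_le zero_le_one, sub_zero] at h
  exact ⟨(ENNReal.toReal_eq_one_iff _).1 h⟩

lemma ae_mem_fgm : ∀ᵐ p ∂fgm θ, p ∈ Icc (0 : ℝ) 1 ×ˢ Icc (0 : ℝ) 1 :=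
  (withDensity_absolutelyContinuous _ _).ae_le
    (ae_restrict_mem (measurableSet_Icc.prod measurableSet_Icc))

lemma _root_.Continuous.memLp_fgm (hθ : θ ∈ Icc (-1) 1) {g : ℝ × ℝ → ℝ} (hg : Continuous g)
    (q : ℝ≥0∞) : MemLp g q (fgm θ) := by
  have := isProbabilityMeasure_fgm hθ
  obtain ⟨C, hC⟩ := (isCompact_Icc.prod isCompact_Icc).exists_bound_of_continuousOn hg.continuousOn
  exact MemLp.of_bound hg.aestronglyMeasurable C (ae_mem_fgm.mono hC)

lemma _root_.Continuous.integrable_fgm (hθ : θ ∈ Icc (-1) 1) {g : ℝ × ℝ → ℝ}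
    (hg : Continuous g) : Integrable g (fgm θ) :=
  memLp_one_iff_integrable.1 (hg.memLp_fgm hθ 1)

lemma integral_comp_fst_fgm (hθ : θ ∈ Icc (-1) 1) {g : ℝ → ℝ} (hg : Continuous g) :
    ∫ p, g p.1 ∂fgm θ = ∫ x in Icc 0 1, g x := by
  rw [integral_fgm hθ (g := fun p => g p.1) (by fun_prop)]
  simp only [integral_mul_const, integral_fgmDensity_right, one_mul]

lemma integral_comp_snd_fgm (hθ : θ ∈ Icc (-1) 1) {g : ℝ → ℝ} (hg : Continuous g) :
    ∫ p, g p.2 ∂fgm θ = ∫ y in Icc 0 1, g y := by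
  simpa only [univ_prod_univ, Measure.restrict_univ, univ_inter, integral_mul_const,
    integral_fgmDensity_left, one_mul]
    using setIntegral_prod_fgm_symm hθ MeasurableSet.univ MeasurableSet.univ
      (g := fun p => g p.2) (by fun_prop)

lemma condExp_comap_fst_fgm (hθ : θ ∈ Icc (-1) 1) {f : ℝ × ℝ → ℝ} (hf : Continuous f)
    {φ : ℝ → ℝ} (hφ : Continuous φ)
    (h : ∀ x, ∫ y in Icc 0 1, fgmDensity θ (x, y) * f (x, y) = φ x) :
    (fgm θ)[f | MeasurableSpace.comap Prod.fst Real.measurableSpace] =ᵐ[fgm θ] fun p => φ p.1 := by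
  have := isProbabilityMeasure_fgm hθ
  have hφ₁ : Continuous fun p : ℝ × ℝ => φ p.1 := by fun_prop
  refine (ae_eq_condExp_of_forall_setIntegral_eq measurable_fst.comap_le (hf.integrable_fgm hθ)
    (fun _ _ _ => (hφ₁.integrable_fgm hθ).integrableOn) ?_
    (hφ.measurable.comp (comap_measurable _)).aestronglyMeasurable).symm
  rintro _ ⟨t, ht, rfl⟩ -
  rw [← prod_univ, setIntegral_prod_fgm hθ ht MeasurableSet.univ hφ₁,
    setIntegral_prod_fgm hθ ht MeasurableSet.univ hf]
  simp only [univ_inter, integral_mul_const, integral_fgmDensity_right, one_mul, h]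

lemma condExp_comap_snd_fgm (hθ : θ ∈ Icc (-1) 1) {f : ℝ × ℝ → ℝ} (hf : Continuous f)
    {φ : ℝ → ℝ} (hφ : Continuous φ)
    (h : ∀ y, ∫ x in Icc 0 1, fgmDensity θ (x, y) * f (x, y) = φ y) :
    (fgm θ)[f | MeasurableSpace.comap Prod.snd Real.measurableSpace] =ᵐ[fgm θ] fun p => φ p.2 := by
  have := isProbabilityMeasure_fgm hθ
  have hφ₂ : Continuous fun p : ℝ × ℝ => φ p.2 := by fun_prop
  refine (ae_eq_condExp_of_forall_setIntegral_eq measurable_snd.comap_le (hf.integrable_fgm hθ)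
    (fun _ _ _ => (hφ₂.integrable_fgm hθ).integrableOn) ?_
    (hφ.measurable.comp (comap_measurable _)).aestronglyMeasurable).symm
  rintro _ ⟨t, ht, rfl⟩ -
  rw [← univ_prod, setIntegral_prod_fgm_symm hθ MeasurableSet.univ ht hφ₂,
    setIntegral_prod_fgm_symm hθ MeasurableSet.univ ht hf]
  simp only [univ_inter, integral_mul_const, integral_fgmDensity_left, one_mul, h]

lemma condExp_fst_linear_fgm (hθ : θ ∈ Icc (-1) 1) (β₁ β₂ : ℝ) :
    (fgm θ)[fun p => β₁ * p.1 + β₂ * p.2 | MeasurableSpace.comap Prod.fst Real.measurableSpace]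
      =ᵐ[fgm θ] fun p => (β₁ + θ / 3 * β₂) * p.1 + β₂ * (1 / 2 - θ / 6) :=
  condExp_comap_fst_fgm hθ (by fun_prop)
    (φ := fun x => (β₁ + θ / 3 * β₂) * x + β₂ * (1 / 2 - θ / 6)) (by fun_prop) fun x =>
    (integral_Icc_eq_of_eq_quadratic ((1 + θ * (1 - 2 * x)) * β₁ * x)
      ((1 + θ * (1 - 2 * x)) * β₂ - 2 * θ * (1 - 2 * x) * β₁ * x) (-2 * θ * (1 - 2 * x) * β₂)
      fun y => by simp only [fgmDensity]; ring).trans (by ring)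

lemma condExp_snd_linear_fgm (hθ : θ ∈ Icc (-1) 1) (β₁ β₂ : ℝ) :
    (fgm θ)[fun p => β₁ * p.1 + β₂ * p.2 | MeasurableSpace.comap Prod.snd Real.measurableSpace]
      =ᵐ[fgm θ] fun p => (β₂ + θ / 3 * β₁) * p.2 + β₁ * (1 / 2 - θ / 6) :=
  condExp_comap_snd_fgm hθ (by fun_prop)
    (φ := fun y => (β₂ + θ / 3 * β₁) * y + β₁ * (1 / 2 - θ / 6)) (by fun_prop) fun y =>
    (integral_Icc_eq_of_eq_quadratic ((1 + θ * (1 - 2 * y)) * β₂ * y)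
      ((1 + θ * (1 - 2 * y)) * β₁ - 2 * θ * (1 - 2 * y) * β₂ * y) (-2 * θ * (1 - 2 * y) * β₁)
      fun x => by simp only [fgmDensity]; ring).trans (by ring)

lemma variance_fst_fgm (hθ : θ ∈ Icc (-1) 1) : Var[Prod.fst; fgm θ] = 1 / 12 := by
  have := isProbabilityMeasure_fgm hθ
  rw [variance_eq_sub (continuous_fst.memLp_fgm hθ 2)]
  simp only [Pi.pow_apply]
  rw [integral_comp_fst_fgm hθ (g := fun x => x) continuous_id,
    integral_comp_fst_fgm hθ (g := fun x => x ^ 2) (by fun_prop),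
    integral_Icc_eq_of_eq_quadratic (F := fun x => x) 0 1 0 fun x => by ring,
    integral_Icc_eq_of_eq_quadratic (F := fun x => x ^ 2) 0 0 1 fun x => by ring]
  norm_num

lemma variance_snd_fgm (hθ : θ ∈ Icc (-1) 1) : Var[Prod.snd; fgm θ] = 1 / 12 := by
  have := isProbabilityMeasure_fgm hθ
  rw [variance_eq_sub (continuous_snd.memLp_fgm hθ 2)]
  simp only [Pi.pow_apply]
  rw [integral_comp_snd_fgm hθ (g := fun x => x) continuous_id,
    integral_comp_snd_fgm hθ (g := fun x => x ^ 2) (by fun_prop),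
    integral_Icc_eq_of_eq_quadratic (F := fun x => x) 0 1 0 fun x => by ring,
    integral_Icc_eq_of_eq_quadratic (F := fun x => x ^ 2) 0 0 1 fun x => by ring]
  norm_num

lemma covariance_fst_snd_fgm (hθ : θ ∈ Icc (-1) 1) : cov[Prod.fst, Prod.snd; fgm θ] = θ / 36 := by
  have := isProbabilityMeasure_fgm hθ
  rw [covariance_eq_sub (continuous_fst.memLp_fgm hθ 2) (continuous_snd.memLp_fgm hθ 2),
    integral_fgm hθ (by fun_prop), integral_comp_fst_fgm hθ (g := fun x => x) continuous_id,
    integral_comp_snd_fgm hθ (g := fun x => x) continuous_id]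
  have hinner : ∀ x, ∫ y in Icc 0 1, fgmDensity θ (x, y) * (x * y)
      = (1 / 2 - θ / 6) * x + θ / 3 * x ^ 2 := fun x =>
    (integral_Icc_eq_of_eq_quadratic 0 ((1 + θ * (1 - 2 * x)) * x) (-2 * θ * (1 - 2 * x) * x)
      fun y => by simp only [fgmDensity]; ring).trans (by ring)
  simp only [Pi.mul_apply, hinner]
  rw [integral_Icc_eq_of_eq_quadratic 0 (1 / 2 - θ / 6) (θ / 3) fun x => by ring,
    integral_Icc_eq_of_eq_quadratic (F := fun x => x) 0 1 0 fun x => by ring]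
  ring

lemma variance_linear_fgm (hθ : θ ∈ Icc (-1) 1) (β₁ β₂ : ℝ) :
    Var[fun p => β₁ * p.1 + β₂ * p.2; fgm θ] = (β₁ ^ 2 + β₂ ^ 2) / 12 + β₁ * β₂ * θ / 18 := by
  have := isProbabilityMeasure_fgm hθ
  rw [variance_fun_add (X := fun p : ℝ × ℝ => β₁ * p.1) (Y := fun p => β₂ * p.2)
      (Continuous.memLp_fgm hθ (by fun_prop) 2) (Continuous.memLp_fgm hθ (by fun_prop) 2),
    variance_const_mul, variance_const_mul, covariance_const_mul_left,
    covariance_const_mul_right, variance_fst_fgm hθ, variance_snd_fgm hθ,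
    covariance_fst_snd_fgm hθ]
  ring

lemma variance_condExp_fst_linear_fgm (hθ : θ ∈ Icc (-1) 1) (β₁ β₂ : ℝ) :
    Var[(fgm θ)[fun p => β₁ * p.1 + β₂ * p.2 |
        MeasurableSpace.comap Prod.fst Real.measurableSpace]; fgm θ]
      = 1 / 12 * (β₁ + θ / 3 * β₂) ^ 2 := by
  have := isProbabilityMeasure_fgm hθ
  rw [variance_congr (condExp_fst_linear_fgm hθ β₁ β₂), variance_add_const (by fun_prop),
    variance_const_mul, variance_fst_fgm hθ]
  ring

lemma variance_condExp_snd_linear_fgm (hθ : θ ∈ Icc (-1) 1) (β₁ β₂ : ℝ) :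
    Var[(fgm θ)[fun p => β₁ * p.1 + β₂ * p.2 |
        MeasurableSpace.comap Prod.snd Real.measurableSpace]; fgm θ]
      = 1 / 12 * (β₂ + θ / 3 * β₁) ^ 2 := by
  have := isProbabilityMeasure_fgm hθ
  rw [variance_congr (condExp_snd_linear_fgm hθ β₁ β₂), variance_add_const (by fun_prop),
    variance_const_mul, variance_snd_fgm hθ]
  ring

end

/-- Shapley effects of the linear function `f(x) = β₁x₁ + β₂x₂` under the
Farlie–Gumbel–Morgenstern copula with parameter `θ ∈ [-1,1]`:
`σ² = (β₁² + β₂²)/12 + β₁β₂θ/18`, `Var(E[f∣x₁]) = (1/12)(β₁ + (θ/3)β₂)²`, and if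
`σ² > 0` then `φ₁/σ² = (1/2)(1 + (1 - θ²/9)(β₁² - β₂²)/(12σ²))`. -/
theorem fgm_linear_shapley (θ : ℝ) (hθ₁ : -1 ≤ θ) (hθ₂ : θ ≤ 1) (β₁ β₂ : ℝ) :
    variance (fun p => β₁ * p.1 + β₂ * p.2) (fgm θ)
        = (β₁ ^ 2 + β₂ ^ 2) / 12 + β₁ * β₂ * θ / 18 ∧
      variance ((fgm θ)[fun p => β₁ * p.1 + β₂ * p.2 |
          MeasurableSpace.comap Prod.fst Real.measurableSpace]) (fgm θ)
        = (1 / 12) * (β₁ + θ / 3 * β₂) ^ 2 ∧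
      (0 < variance (fun p => β₁ * p.1 + β₂ * p.2) (fgm θ) →
        phiOne (fgm θ) (fun p => β₁ * p.1 + β₂ * p.2)
            / variance (fun p => β₁ * p.1 + β₂ * p.2) (fgm θ)
          = (1 / 2) * (1 + (1 - θ ^ 2 / 9) * (β₁ ^ 2 - β₂ ^ 2)
              / (12 * variance (fun p => β₁ * p.1 + β₂ * p.2) (fgm θ)))) := by
  have hθ : θ ∈ Icc (-1) 1 := ⟨hθ₁, hθ₂⟩
  refine ⟨variance_linear_fgm hθ β₁ β₂, variance_condExp_fst_linear_fgm hθ β₁ β₂, fun hσ => ?_⟩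
  rw [phiOne, variance_condExp_fst_linear_fgm hθ β₁ β₂, variance_condExp_snd_linear_fgm hθ β₁ β₂]
  field_simp
  ring
end

section
/- For integers d ≥ 1 and 1 ≤ k ≤ d, Σ_{r=0}^{d−k} C(d−k, r) / C(d−1, r−1+k) = d/k, where C(n,m) denotes the binomial coefficient. -/
/-!
Writing `k = m + 1` and `d = n + m + 1`, the identity `C(n, r) C(n+m, m) = C(r+m, m) C(n+m, r+m)`
turns every summand into `C(r+m, m) / C(n+m, m)`, so the sum is a hockey-stick sum
`C(n+m+1, m+1)` over `C(n+m, m)`, which is `(n+m+1)/(m+1) = d/k`.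
-/

open Finset

namespace Nat

variable {K : Type*} [Field K] [CharZero K]

lemma cast_choose_div_choose_add_right {n r : ℕ} (m : ℕ) (hr : r ≤ n) :
    (n.choose r : K) / (n + m).choose (r + m) = ((r + m).choose m : K) / (n + m).choose m := by
  have h := choose_mul (n := n + m) (k := r + m) (s := m) le_add_self
  rw [Nat.add_sub_cancel, Nat.add_sub_cancel] at h
  rw [div_eq_div_iff (cast_ne_zero.mpr (choose_pos (by omega)).ne')
    (cast_ne_zero.mpr (choose_pos le_add_self).ne')]
  exact_mod_cast by linarith

lemma cast_add_one_choose_add_one_div_choose {n k : ℕ} (hk : k ≤ n) :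
    ((n + 1).choose (k + 1) : K) / n.choose k = (n + 1) / (k + 1) := by
  rw [div_eq_div_iff (cast_ne_zero.mpr (choose_pos hk).ne') k.cast_add_one_ne_zero]
  exact_mod_cast (add_one_mul_choose_eq n k).symm

end Nat

/-- The combinatorial identity `∑_{r=0}^{d-k} C(d-k, r) / C(d-1, r+k-1) = d/k`
for `1 ≤ k ≤ d`, used to simplify the Shapley value of the
maximum-of-exponentials game. -/
theorem sum_choose_div_choose (d k : ℕ) (hk : 1 ≤ k) (hkd : k ≤ d) :
    ∑ r ∈ Finset.range (d - k + 1),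
        (Nat.choose (d - k) r : ℝ) / (Nat.choose (d - 1) (r + k - 1) : ℝ)
      = (d : ℝ) / (k : ℝ) := by
  obtain ⟨m, rfl⟩ : ∃ m, k = m + 1 := ⟨k - 1, by omega⟩
  obtain ⟨n, rfl⟩ : ∃ n, d = n + m + 1 := ⟨d - (m + 1), by omega⟩
  simp only [show n + m + 1 - (m + 1) = n by omega, Nat.add_sub_cancel, ← add_assoc]
  calc ∑ r ∈ range (n + 1), (n.choose r : ℝ) / (n + m).choose (r + m)
      = ∑ r ∈ range (n + 1), ((r + m).choose m : ℝ) / (n + m).choose m :=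
        sum_congr rfl fun r hr ↦
          Nat.cast_choose_div_choose_add_right m (Nat.lt_succ_iff.mp (mem_range.mp hr))
    _ = ((n + m + 1).choose (m + 1) : ℝ) / (n + m).choose m := by
        rw [← sum_div, ← Nat.sum_range_add_choose, Nat.cast_sum]
    _ = _ := by
        rw [Nat.cast_add_one_choose_add_one_div_choose (by omega)]
        push_cast
        rfl
end

section
/- Let x_1,…,x_d be square-integrable real random variables (not necessarily independent) and define the game val(u) = Var(Σ_{j∈u} x_j) for u ⊆ {1,…,d}, with val(∅) = 0. Then the Shapley value of player j equals φ_j = Cov(x_j, S), where S = Σ_{k=1}^{d} x_k. -/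
open Finset MeasureTheory ProbabilityTheory

/-- The covariance of `f` and `g` under `μ`. -/
noncomputable def covar {α : Type*} [MeasurableSpace α] (μ : Measure α)
    (f g : α → ℝ) : ℝ :=
  ∫ ω, (f ω - ∫ ω', f ω' ∂μ) * (g ω - ∫ ω', g ω' ∂μ) ∂μ

namespace Finset

variable {α : Type*}

theorem sum_powerset_inv_choose_card (t : Finset α) :
    ∑ u ∈ t.powerset, ((#t).choose #u : ℝ)⁻¹ = #t + 1 := by
  rw [sum_powerset_apply_card fun m => ((#t).choose m : ℝ)⁻¹]
  have hterm : ∀ m ∈ range (#t + 1), (#t).choose m • ((#t).choose m : ℝ)⁻¹ = 1 := by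
    intro m hm
    have hpos : ((#t).choose m : ℝ) ≠ 0 :=
      Nat.cast_ne_zero.mpr (Nat.choose_pos (Nat.lt_succ_iff.mp (mem_range.mp hm))).ne'
    rw [nsmul_eq_mul, mul_inv_cancel₀ hpos]
  rw [sum_congr rfl hterm, sum_const, card_range, nsmul_one, Nat.cast_add_one]

theorem sum_powerset_filter_mem_eq_sum_filter_notMem [DecidableEq α] {β : Type*}
    [AddCommMonoid β] {t : Finset α} {w : Finset α → β} (hw : ∀ u ⊆ t, w (t \ u) = w u)
    {k : α} (hk : k ∈ t) :
    ∑ u ∈ t.powerset with k ∈ u, w u = ∑ u ∈ t.powerset with k ∉ u, w u := by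
  refine sum_nbij' (t \ ·) (t \ ·) ?_ ?_ ?_ ?_ ?_ <;> intro u hu
    <;> rw [mem_filter, mem_powerset] at hu
  · simp [hu.2]
  · simp [hu.2, hk]
  · exact sdiff_sdiff_eq_self hu.1
  · exact sdiff_sdiff_eq_self hu.1
  · exact (hw u hu.1).symm

theorem sum_powerset_filter_mem_inv_choose_card [DecidableEq α] {t : Finset α} {k : α}
    (hk : k ∈ t) :
    ∑ u ∈ t.powerset with k ∈ u, ((#t).choose #u : ℝ)⁻¹ = (#t + 1) / 2 := by
  have hsymm : ∀ u ⊆ t, ((#t).choose #(t \ u) : ℝ)⁻¹ = ((#t).choose #u : ℝ)⁻¹ := by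
    intro u hu
    rw [card_sdiff_of_subset hu, Nat.choose_symm (card_le_card hu)]
  have hhalves := sum_filter_add_sum_filter_not t.powerset (k ∈ ·)
    fun u => ((#t).choose #u : ℝ)⁻¹
  rw [← sum_powerset_filter_mem_eq_sum_filter_notMem hsymm hk,
    sum_powerset_inv_choose_card] at hhalves
  linarith

end Finset

theorem shapley_eq_of_marginal_eq {d : ℕ} {val : Finset (Fin d) → ℝ} {j : Fin d} (a : ℝ)
    (b : Fin d → ℝ) (hval : ∀ u ⊆ univ.erase j, val (insert j u) - val u = a + ∑ k ∈ u, b k) :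
    shapley val j = a + (∑ k ∈ univ.erase j, b k) / 2 := by
  set t := univ.erase j
  have hcard : d - 1 = #t := by rw [card_erase_of_mem (mem_univ j), card_univ, Fintype.card_fin]
  have hd : (d : ℝ) = #t + 1 := by rw [← hcard, Nat.cast_sub j.pos, Nat.cast_one, sub_add_cancel]
  have hd0 : (d : ℝ) ≠ 0 := by rw [hd]; positivity
  let w : Finset (Fin d) → ℝ := fun u => ((#t).choose #u : ℝ)⁻¹
  have hswap : ∑ u ∈ t.powerset, ∑ k ∈ u, w u * b k
      = ∑ k ∈ t, (∑ u ∈ t.powerset with k ∈ u, w u) * b k := by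
    simp_rw [sum_mul]
    exact sum_comm' fun u k => by
      simp only [mem_powerset, mem_filter]
      exact ⟨fun ⟨hu, hk⟩ => ⟨⟨hu, hk⟩, hu hk⟩, fun ⟨⟨hu, hk⟩, _⟩ => ⟨hu, hk⟩⟩
  calc shapley val j
      = (d : ℝ)⁻¹ * ∑ u ∈ t.powerset, (w u * a + ∑ k ∈ u, w u * b k) := by
        rw [shapley, hcard]
        refine congrArg _ (sum_congr rfl fun u hu => ?_)
        rw [hval u (mem_powerset.mp hu), mul_add, mul_sum]
    _ = (d : ℝ)⁻¹ * ((#t + 1) * a + ∑ k ∈ t, (#t + 1) / 2 * b k) := by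
        have hhalf : ∀ k ∈ t, (∑ u ∈ t.powerset with k ∈ u, w u) * b k = (#t + 1) / 2 * b k :=
          fun k hk => by rw [sum_powerset_filter_mem_inv_choose_card hk]
        rw [sum_add_distrib, ← sum_mul, hswap, sum_congr rfl hhalf, sum_powerset_inv_choose_card]
    _ = a + (∑ k ∈ t, b k) / 2 := by
        rw [← mul_sum, ← hd]
        field_simp

theorem variance_fun_sum_insert_sub {Ω ι : Type*} [MeasurableSpace Ω] {μ : Measure Ω}
    [IsFiniteMeasure μ] [DecidableEq ι] {x : ι → Ω → ℝ} (hx : ∀ k, MemLp (x k) 2 μ)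
    {u : Finset ι} {j : ι} (hj : j ∉ u) :
    Var[fun ω => ∑ k ∈ insert j u, x k ω; μ] - Var[fun ω => ∑ k ∈ u, x k ω; μ]
      = Var[x j; μ] + ∑ k ∈ u, 2 * cov[x j, x k; μ] := by
  simp_rw [sum_insert hj]
  rw [variance_fun_add (hx j) (memLp_finsetSum u fun k _ => hx k),
    covariance_fun_sum_right' (fun k _ => hx k) (hx j), mul_sum]
  ring

theorem shapley_variance_of_sum_general
    {Ω : Type*} [MeasurableSpace Ω] (μ : Measure Ω) [IsProbabilityMeasure μ]
    (d : ℕ) (x : Fin d → Ω → ℝ)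
    (hx2 : ∀ j, MemLp (x j) 2 μ) (j : Fin d) :
    shapley (fun u => variance (fun ω => ∑ k ∈ u, x k ω) μ) j
      = covar μ (x j) (fun ω => ∑ k, x k ω) := by
  have hmarginal : ∀ u ⊆ univ.erase j,
      Var[fun ω => ∑ k ∈ insert j u, x k ω; μ] - Var[fun ω => ∑ k ∈ u, x k ω; μ]
        = Var[x j; μ] + ∑ k ∈ u, 2 * cov[x j, x k; μ] :=
    fun u hu => variance_fun_sum_insert_sub hx2 fun hj => notMem_erase j _ (hu hj)
  change _ = cov[x j, fun ω => ∑ k, x k ω; μ]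
  rw [shapley_eq_of_marginal_eq _ _ hmarginal, covariance_fun_sum_right hx2 (hx2 j),
    ← add_sum_erase _ _ (mem_univ j), covariance_self (hx2 j).aemeasurable, ← mul_sum]
  ring

/-- For the game `val u = Var(∑_{j∈u} x_j)` built from (possibly dependent)
square-integrable random variables, the Shapley value of player `j` is
`Cov(x_j, S)` where `S = ∑_{k=1}^d x_k`. -/
theorem shapley_variance_of_sum
    {Ω : Type*} [MeasurableSpace Ω] (μ : Measure Ω) [IsProbabilityMeasure μ]
    (d : ℕ) (x : Fin d → Ω → ℝ) (hx : ∀ j, Measurable (x j))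
    (hx2 : ∀ j, MemLp (x j) 2 μ) (j : Fin d) :
    shapley (fun u => variance (fun ω => ∑ k ∈ u, x k ω) μ) j
      = covar μ (x j) (fun ω => ∑ k, x k ω) :=
  shapley_variance_of_sum_general μ d x hx2 j
end
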